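/- If ξ ∈ ε̂_{Ω+1}, then Θ_X(ξ) is not a limit point of X if and only if ξ < Ω and ξ ∈ JUMP(X). -/

import Mathlib

open Ordinal Set

noncomputable section
open scoped Classical

/-- `Ω`, the first uncountable ordinal. -/
def OmegaO : Ordinal := (Cardinal.aleph 1).ord

/-- `ε_{Ω+1}`, the least `ε > Ω` with `ω ^ ε = ε`. -/
def epsOmega : Ordinal := nfp (fun a => Ordinal.omega0 ^ a) (OmegaO + 1)

lemma omega0_le_OmegaO : Ordinal.omega0 ≤ OmegaO := by
  rw [OmegaO, ← Cardinal.ord_aleph0]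
  exact Cardinal.ord_le_ord.2 (Cardinal.aleph0_le_aleph 1)

lemma one_lt_OmegaO : 1 < OmegaO :=
  lt_of_lt_of_le Ordinal.one_lt_omega0 omega0_le_OmegaO

lemma OmegaO_pos : 0 < OmegaO := lt_trans zero_lt_one one_lt_OmegaO

/-- `ξ*`, the maximal coefficient in the `Ω`-normal form of `ξ`. -/
def star (ξ : Ordinal) : Ordinal :=
  if h0 : ξ = 0 then 0
  else if hl : log OmegaO ξ < ξ then
    max (max (star (log OmegaO ξ)) (star (ξ % OmegaO ^ log OmegaO ξ)))
      (ξ / OmegaO ^ log OmegaO ξ)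
  else 0
termination_by ξ
decreasing_by
  · exact hl
  · exact mod_opow_log_lt_self _ h0

/-- The generalized fundamental sequence `ξ[θ]`. -/
def fs (ξ θ : Ordinal) : Ordinal :=
  if h0 : ξ ≤ 1 then 0
  else if hmod : ξ % OmegaO ^ log OmegaO ξ ≠ 0 then
    OmegaO ^ log OmegaO ξ * (ξ / OmegaO ^ log OmegaO ξ) + fs (ξ % OmegaO ^ log OmegaO ξ) θ
  else if Order.IsSuccLimit (ξ / OmegaO ^ log OmegaO ξ) then OmegaO ^ log OmegaO ξ * θ
  else if hβ : ξ / OmegaO ^ log OmegaO ξ = 1 then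
    (if hlog : Order.IsSuccLimit (log OmegaO ξ) then
       (if hll : log OmegaO ξ < ξ then OmegaO ^ fs (log OmegaO ξ) θ else 0)
     else OmegaO ^ Ordinal.pred (log OmegaO ξ) * θ)
  else
    OmegaO ^ log OmegaO ξ * Ordinal.pred (ξ / OmegaO ^ log OmegaO ξ) + fs (OmegaO ^ log OmegaO ξ) θ
termination_by ξ
decreasing_by
  · exact mod_opow_log_lt_self _ (by intro h; exact h0 (by simp [h]))
  · exact hll
  · -- `Ω ^ log Ω ξ < ξ`
    have hξ0 : ξ ≠ 0 := by intro h; exact h0 (by simp [h])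
    have hle : OmegaO ^ log OmegaO ξ ≤ ξ := opow_log_le_self _ hξ0
    have hpos : 0 < OmegaO ^ log OmegaO ξ :=
      opow_pos _ OmegaO_pos
    have hβ0 : 0 < ξ / OmegaO ^ log OmegaO ξ :=
      Ordinal.div_pos (by positivity) |>.2 hle
    have hβ1 : 1 < ξ / OmegaO ^ log OmegaO ξ :=
      lt_of_le_of_ne (Ordinal.one_le_iff_ne_zero.2 hβ0.ne') (Ne.symm hβ)
    calc OmegaO ^ log OmegaO ξ = OmegaO ^ log OmegaO ξ * 1 := (mul_one _).symm
      _ < OmegaO ^ log OmegaO ξ * (ξ / OmegaO ^ log OmegaO ξ) := by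
          first
            | exact mul_lt_mul_of_pos_left hβ1 hpos
            | exact (mul_lt_mul_iff_right₀ hpos).2 hβ1
            | exact (mul_lt_mul_iff_of_pos_left hpos).2 hβ1
      _ ≤ ξ := Ordinal.mul_div_le _ _

/-- The terminal part `τ(ξ)`. -/
def tau (ξ : Ordinal) : Ordinal :=
  if h0 : ξ = 0 then 0
  else if hmod : ξ % OmegaO ^ log OmegaO ξ ≠ 0 then tau (ξ % OmegaO ^ log OmegaO ξ)
  else if Order.IsSuccLimit (ξ / OmegaO ^ log OmegaO ξ) then ξ / OmegaO ^ log OmegaO ξ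
  else if log OmegaO ξ = 0 then 1
  else if hlog : Order.IsSuccLimit (log OmegaO ξ) then
    (if hll : log OmegaO ξ < ξ then tau (log OmegaO ξ) else 0)
  else OmegaO
termination_by ξ
decreasing_by
  · exact mod_opow_log_lt_self _ h0
  · exact hll

/-- The collapsing function `Θ_X`. -/
def ThetaF (X : Set Ordinal) (ξ : Ordinal) : Ordinal :=
  sInf {θ | θ ∈ X ∧ star ξ < θ ∧ ∀ ζ, ζ < ξ → star ζ < θ → ThetaF X ζ < θ}
termination_by ξ
decreasing_by exact by assumption

/-- `Ω_n`: the tower `Ω_0 = 1`, `Ω_{n+1} = Ω ^ Ω_n`. -/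
def OmegaTow : ℕ → Ordinal
  | 0 => 1
  | n + 1 => OmegaO ^ OmegaTow n

/-- `Θ_X(ε_{Ω+1}) = sup_n Θ_X(Ω_n)`. -/
def ThetaEps (X : Set Ordinal) : Ordinal := ⨆ n : ℕ, ThetaF X (OmegaTow n)

/-- `ε̂_{Ω+1}`. -/
def hatEps (X : Set Ordinal) : Set Ordinal :=
  {ξ | ξ < epsOmega ∧ star ξ < ThetaEps X}

/-- `X` is a club in `Ω`. -/
def IsClubBelowOmega (X : Set Ordinal) : Prop :=
  (∀ x ∈ X, x < OmegaO) ∧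
  (∀ a, a < OmegaO → ∃ x ∈ X, a < x) ∧
  (∀ S : Set Ordinal, S ⊆ X → S.Nonempty → sSup S < OmegaO → sSup S ∈ X)

/-- The set of limit points of `X` (below `Ω`). -/
def limitPtsOf (X : Set Ordinal) : Set Ordinal :=
  {x | 0 < x ∧ ∀ y, y < x → ∃ z ∈ X, y < z ∧ z < x}

/-- `FIX(X)`. -/
def FIXs (X : Set Ordinal) : Set Ordinal :=
  {ξ | ξ < epsOmega ∧ star (fs ξ 1) < star ξ ∧ star ξ = tau ξ ∧
    ∃ γ, ξ < γ ∧ γ < epsOmega ∧ star ξ = ThetaF X γ}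

/-- `JUMP(X)`. -/
def JUMPs (X : Set Ordinal) : Set Ordinal :=
  {0} ∪ {ξ | ∃ ζ, ξ = ζ + 1} ∪ FIXs X

/-- `Θ*`. -/
def ThetaStarF (X : Set Ordinal) (ξ : Ordinal) : Ordinal :=
  if ∃ ζ, ξ = ζ + 1 then ThetaF X (Ordinal.pred ξ)
  else if ξ ∈ FIXs X then tau ξ
  else 0

/-- `ξ̌`. -/
def checkF (X : Set Ordinal) (ξ : Ordinal) : Ordinal :=
  if 0 < ThetaStarF X ξ then OmegaO * (ξ / OmegaO) else ξ

/-- `ℙ`, the club of countable additively indecomposable ordinals. -/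
def PP : Set Ordinal := {x | x < OmegaO ∧ ∃ a, x = Ordinal.omega0 ^ a}

/-- `1 + Ord`, the club of nonzero countable ordinals. -/
def oneOrdS : Set Ordinal := {x | 0 < x ∧ x < OmegaO}

/-- `Θ^{(i)}(ξ)`. -/
def ThetaIter (X : Set Ordinal) (ξ : Ordinal) : ℕ → Ordinal
  | 0 => ThetaStarF X ξ
  | n + 1 => ThetaF X (fs (checkF X ξ) (ThetaIter X ξ n))

/-- A Buchholz system of fundamental sequences for `Θ_X`. -/
def IsBuchholz (X : Set Ordinal) (B : Ordinal → ℕ → Ordinal) : Prop :=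
  (∀ n, B 0 n = 0) ∧
  (∀ α ξ n, ξ ∈ hatEps X → OmegaO ≤ ξ → tau ξ < OmegaO → ξ = fs α (tau ξ) →
    B ξ n = fs α (B (tau ξ) n)) ∧
  (∀ ξ n, ξ ∈ hatEps X → 0 < tau (checkF X ξ) → tau (checkF X ξ) < OmegaO →
    B (ThetaF X ξ) n = ThetaF X (B (checkF X ξ) n + ThetaStarF X ξ)) ∧
  (∀ ξ n, ξ ∈ hatEps X → tau (checkF X ξ) = OmegaO →
    B (ThetaF X ξ) n = ThetaIter X ξ n)

/-- The additional clause for the `σ = Θ_{1+Ord}` Buchholz system. -/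
def SigmaExtra (B : Ordinal → ℕ → Ordinal) : Prop :=
  ∀ β n, β < OmegaO → B (ThetaF oneOrdS β) n = β

/-- The additional clauses for the `ϑ = Θ_ℙ` Buchholz system. -/
def VarthetaExtra (B : Ordinal → ℕ → Ordinal) : Prop :=
  (∀ α β n, 0 < β → (∀ α' < α, α' + β < α + β) → B (α + β) n = α + B β n) ∧
  (∀ β n, β < OmegaO → β ∈ JUMPs PP → B (ThetaF PP β) n = ThetaStarF PP β * n)


/-!
The set whose minimum is `Θ_X(ξ)` is nonempty: for countable `c` only countably many
`ζ < ε_{Ω+1}` have `ζ* ≤ c`, so an `ω`-chain through the club `X` closes off.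

For `ξ ≥ Ω` every countable `y < Θ_X(ξ)` satisfies `y < Θ_X(y) < Θ_X(ξ)`, so `Θ_X(ξ)` is a limit
point of `X`. Below `Ω`, `Θ_X` is strictly increasing. At `0`, at successors `ζ + 1` and at points
of `FIX(X)` a single ordinal (`0`, `Θ_X(ζ)`, resp. `ξ = Θ_X(γ)`) bounds all earlier values, so
`Θ_X(ξ)` is the next point of `X` after it. At a limit `ξ < Ω`, `Θ_X(ξ)` is the supremum of the
earlier values unless that supremum is `ξ` itself; then `ξ ∈ X`, and since `ξ < Θ_X(Ω_n)` for some
`n`, the least `γ` with `γ* < ξ ≤ Θ_X(γ)` satisfies `Θ_X(γ) = ξ`, which puts `ξ` into `FIX(X)`.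
-/

lemma OmegaO_eq_omega_one : OmegaO = ω₁ := Cardinal.ord_aleph 1

lemma isSuccLimit_OmegaO : Order.IsSuccLimit OmegaO :=
  OmegaO_eq_omega_one ▸ Cardinal.isSuccLimit_omega 1

lemma countable_Iio_of_lt_OmegaO {c : Ordinal} (hc : c < OmegaO) : (Iio c).Countable := by
  rw [← Cardinal.le_aleph0_iff_set_countable, Cardinal.mk_Iio_ordinal, Cardinal.lift_le_aleph0,
    ← Cardinal.lt_aleph_one_iff, ← Cardinal.lt_omega_iff_card_lt, ← OmegaO_eq_omega_one]
  exact hc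

lemma countable_Iic_of_lt_OmegaO {c : Ordinal} (hc : c < OmegaO) : (Iic c).Countable := by
  rw [← Order.Iio_succ]
  exact countable_Iio_of_lt_OmegaO (isSuccLimit_OmegaO.succ_lt hc)

lemma sSup_lt_OmegaO {S : Set Ordinal} (hS : S.Countable) (hlt : ∀ x ∈ S, x < OmegaO) :
    sSup S < OmegaO := by
  have := hS.to_subtype
  rw [OmegaO_eq_omega_one] at hlt ⊢
  rw [← Subtype.range_coe (s := S)]
  exact iSup_lt_omega_one fun x => hlt x x.2

lemma IsClubBelowOmega.sSup_mem {X S : Set Ordinal} (hX : IsClubBelowOmega X) (hSX : S ⊆ X)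
    (hS : S.Countable) (hne : S.Nonempty) : sSup S ∈ X :=
  hX.2.2 S hSX hne (sSup_lt_OmegaO hS fun x hx => hX.1 x (hSX hx))

lemma IsClubBelowOmega.exists_mem_forall_lt {X : Set Ordinal} (hX : IsClubBelowOmega X)
    {g : Ordinal → Ordinal} (hg : Monotone g) (hgΩ : ∀ t < OmegaO, g t < OmegaO)
    {a : Ordinal} (ha : a < OmegaO) : ∃ θ ∈ X, a < θ ∧ ∀ t < θ, g t < θ := by
  have hnext : ∀ b, ∃ x, b < OmegaO → x ∈ X ∧ b < x := fun b => by
    by_cases hb : b < OmegaO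
    · obtain ⟨x, hx⟩ := hX.2.1 b hb
      exact ⟨x, fun _ => hx⟩
    · exact ⟨0, fun h => absurd h hb⟩
  choose next hnext using hnext
  let θ : ℕ → Ordinal := fun k => Nat.rec (next a) (fun _ t => next (max t (g t))) k
  have hθX : ∀ k, θ k ∈ X := by
    intro k
    induction k with
    | zero => exact (hnext a ha).1
    | succ k ih => exact (hnext _ (max_lt (hX.1 _ ih) (hgΩ _ (hX.1 _ ih)))).1
  have hstep : ∀ k, max (θ k) (g (θ k)) < θ (k + 1) := fun k =>
    (hnext _ (max_lt (hX.1 _ (hθX k)) (hgΩ _ (hX.1 _ (hθX k))))).2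
  have hbdd : BddAbove (range θ) := ⟨OmegaO, forall_mem_range.2 fun k => (hX.1 _ (hθX k)).le⟩
  refine ⟨sSup (range θ), hX.sSup_mem (range_subset_iff.2 hθX) (countable_range θ)
    (range_nonempty θ), (hnext a ha).2.trans_le (le_csSup hbdd ⟨0, rfl⟩), fun t ht => ?_⟩
  obtain ⟨_, ⟨k, rfl⟩, htk⟩ := exists_lt_of_lt_csSup (range_nonempty θ) ht
  calc g t ≤ g (θ k) := hg htk.le
    _ ≤ max (θ k) (g (θ k)) := le_max_right _ _
    _ < θ (k + 1) := hstep k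
    _ ≤ sSup (range θ) := le_csSup hbdd ⟨k + 1, rfl⟩

lemma star_ordinal_zero : star (0 : Ordinal) = 0 := by
  rw [star.eq_def]
  simp

lemma star_eq_max {ζ : Ordinal} (h0 : ζ ≠ 0) (hl : log OmegaO ζ < ζ) :
    star ζ = max (max (star (log OmegaO ζ)) (star (ζ % OmegaO ^ log OmegaO ζ)))
      (ζ / OmegaO ^ log OmegaO ζ) := by
  rw [star.eq_def, dif_neg h0, dif_pos hl]

lemma div_opow_log_lt_OmegaO (ζ : Ordinal) : ζ / OmegaO ^ log OmegaO ζ < OmegaO := by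
  rw [← lt_mul_iff_div_lt (opow_ne_zero _ OmegaO_pos.ne'), ← opow_succ]
  exact lt_opow_succ_log_self one_lt_OmegaO ζ

lemma star_lt_OmegaO (ζ : Ordinal) : star ζ < OmegaO := by
  induction ζ using WellFoundedLT.induction with
  | _ ζ ih =>
    rw [star.eq_def]
    split_ifs with h0 hl
    · exact OmegaO_pos
    · exact max_lt (max_lt (ih _ hl) (ih _ (mod_opow_log_lt_self _ h0)))
        (div_opow_log_lt_OmegaO ζ)
    · exact OmegaO_pos

lemma star_eq_self {ζ : Ordinal} (h0 : ζ ≠ 0) (hΩ : ζ < OmegaO) : star ζ = ζ := by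
  have hlog : log OmegaO ζ = 0 := log_eq_zero hΩ
  rw [star_eq_max h0 (hlog ▸ pos_iff_ne_zero.2 h0), hlog, opow_zero, Ordinal.mod_one,
    Ordinal.div_one, star_ordinal_zero]
  simp

lemma star_le_self {ζ : Ordinal} (hΩ : ζ < OmegaO) : star ζ ≤ ζ := by
  rcases eq_or_ne ζ 0 with rfl | h0
  · rw [star_ordinal_zero]
  · rw [star_eq_self h0 hΩ]

lemma star_ordinal_one : star (1 : Ordinal) = 1 := star_eq_self one_ne_zero one_lt_OmegaO

lemma omega0_opow_OmegaO : ω ^ OmegaO = OmegaO := by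
  refine le_antisymm ?_ (right_le_opow _ one_lt_omega0)
  rw [opow_le_of_isSuccLimit omega0_ne_zero isSuccLimit_OmegaO]
  intro b hb
  rw [OmegaO_eq_omega_one] at hb ⊢
  exact (isPrincipal_opow_omega 1 omega0_lt_omega_one hb).le

lemma omega0_opow_epsOmega : ω ^ epsOmega = epsOmega :=
  nfp_fp (isNormal_opow one_lt_omega0) _

lemma OmegaO_lt_epsOmega : OmegaO < epsOmega :=
  (lt_add_one _).trans_le (le_nfp _ _)

lemma OmegaO_opow_epsOmega : OmegaO ^ epsOmega = epsOmega := by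
  have hadd : OmegaO + epsOmega = epsOmega := by
    have h := add_omega0_opow (omega0_opow_epsOmega.symm ▸ OmegaO_lt_epsOmega)
    rwa [omega0_opow_epsOmega] at h
  calc OmegaO ^ epsOmega = ω ^ (OmegaO * epsOmega) := by rw [opow_mul, omega0_opow_OmegaO]
    _ = ω ^ ω ^ (OmegaO + epsOmega) := by
      rw [opow_add, omega0_opow_OmegaO, omega0_opow_epsOmega]
    _ = epsOmega := by rw [hadd, omega0_opow_epsOmega, omega0_opow_epsOmega]

lemma OmegaTow_lt_epsOmega : ∀ n, OmegaTow n < epsOmega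
  | 0 => one_lt_OmegaO.trans OmegaO_lt_epsOmega
  | n + 1 => by
    rw [OmegaTow, ← OmegaO_opow_epsOmega]
    exact (opow_lt_opow_iff_right one_lt_OmegaO).2 (OmegaTow_lt_epsOmega n)

lemma epsOmega_le_of_OmegaO_opow_le {ζ : Ordinal} (h0 : ζ ≠ 0) (h : OmegaO ^ ζ ≤ ζ) :
    epsOmega ≤ ζ := by
  have hΩ : OmegaO ≤ ζ := calc
    OmegaO = OmegaO ^ (1 : Ordinal) := (opow_one _).symm
    _ ≤ OmegaO ^ ζ := opow_le_opow_right OmegaO_pos (Order.one_le_iff_ne_zero.2 h0)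
    _ ≤ ζ := h
  have hΩlt : OmegaO < ζ := calc
    OmegaO = OmegaO ^ (1 : Ordinal) := (opow_one _).symm
    _ < OmegaO ^ OmegaO := (opow_lt_opow_iff_right one_lt_OmegaO).2 one_lt_OmegaO
    _ ≤ OmegaO ^ ζ := opow_le_opow_right OmegaO_pos hΩ
    _ ≤ ζ := h
  exact nfp_le_fp (isNormal_opow one_lt_omega0).monotone (Order.add_one_le_of_lt hΩlt)
    ((opow_le_opow_left ζ omega0_le_OmegaO).trans h)

lemma log_lt_self_of_lt_epsOmega {ζ : Ordinal} (h0 : ζ ≠ 0) (hζ : ζ < epsOmega) :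
    log OmegaO ζ < ζ := by
  by_contra! hle
  exact hζ.not_ge (epsOmega_le_of_OmegaO_opow_le h0
    ((opow_le_opow_right OmegaO_pos hle).trans (opow_log_le_self _ h0)))

lemma star_OmegaTow : ∀ n, star (OmegaTow n) = 1
  | 0 => star_ordinal_one
  | n + 1 => by
    have h0 : OmegaTow (n + 1) ≠ 0 := opow_ne_zero _ OmegaO_pos.ne'
    have hlog : log OmegaO (OmegaTow (n + 1)) = OmegaTow n := log_opow one_lt_OmegaO _
    rw [star_eq_max h0 (log_lt_self_of_lt_epsOmega h0 (OmegaTow_lt_epsOmega _)), hlog,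
      star_OmegaTow n, OmegaTow, Ordinal.mod_self, Ordinal.div_self (opow_ne_zero _ OmegaO_pos.ne'),
      star_ordinal_zero]
    simp

lemma fs_one_of_isSuccLimit {ξ : Ordinal} (hlim : Order.IsSuccLimit ξ) (hΩ : ξ < OmegaO) :
    fs ξ 1 = 1 := by
  rw [fs.eq_def, dif_neg (one_lt_of_isSuccLimit hlim).not_ge]
  simp only [log_eq_zero hΩ, opow_zero, Ordinal.mod_one, Ordinal.div_one]
  rw [dif_neg (by simp), if_pos hlim, one_mul]

lemma tau_of_isSuccLimit {ξ : Ordinal} (hlim : Order.IsSuccLimit ξ) (hΩ : ξ < OmegaO) :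
    tau ξ = ξ := by
  rw [tau.eq_def, dif_neg hlim.pos.ne']
  simp only [log_eq_zero hΩ, opow_zero, Ordinal.mod_one, Ordinal.div_one]
  rw [dif_neg (by simp), if_pos hlim]

def nfStage (c : Ordinal) : ℕ → Set Ordinal
  | 0 => {0}
  | k + 1 => nfStage c k ∪ (fun p : Ordinal × Ordinal × Ordinal => OmegaO ^ p.1 * p.2.1 + p.2.2) ''
      (nfStage c k ×ˢ Iic c ×ˢ nfStage c k)

lemma countable_nfStage {c : Ordinal} (hc : c < OmegaO) : ∀ k, (nfStage c k).Countable
  | 0 => countable_singleton 0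
  | k + 1 => (countable_nfStage hc k).union <|
      ((countable_nfStage hc k).prod ((countable_Iic_of_lt_OmegaO hc).prod
        (countable_nfStage hc k))).image _

lemma monotone_nfStage (c : Ordinal) : Monotone (nfStage c) :=
  monotone_nat_of_le_succ fun _ => subset_union_left

lemma setOf_star_le_subset_iUnion_nfStage (c : Ordinal) :
    {ζ | ζ < epsOmega ∧ star ζ ≤ c} ⊆ ⋃ k, nfStage c k := by
  intro ζ
  induction ζ using WellFoundedLT.induction with
  | _ ζ ih =>
    rintro ⟨hζε, hζc⟩
    rcases eq_or_ne ζ 0 with rfl | h0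
    · exact mem_iUnion.2 ⟨0, rfl⟩
    have hl := log_lt_self_of_lt_epsOmega h0 hζε
    have hmod := mod_opow_log_lt_self OmegaO h0
    rw [star_eq_max h0 hl, max_le_iff, max_le_iff] at hζc
    obtain ⟨i, hi⟩ := mem_iUnion.1 (ih _ hl ⟨hl.trans hζε, hζc.1.1⟩)
    obtain ⟨j, hj⟩ := mem_iUnion.1 (ih _ hmod ⟨hmod.trans hζε, hζc.1.2⟩)
    exact mem_iUnion.2 ⟨max i j + 1, Or.inr ⟨⟨_, _, _⟩, ⟨monotone_nfStage c (le_max_left i j) hi,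
      hζc.2, monotone_nfStage c (le_max_right i j) hj⟩, div_add_mod _ _⟩⟩

lemma countable_setOf_star_le {c : Ordinal} (hc : c < OmegaO) :
    {ζ | ζ < epsOmega ∧ star ζ ≤ c}.Countable :=
  (countable_iUnion (countable_nfStage hc)).mono (setOf_star_le_subset_iUnion_nfStage c)

def thetaCandidates (X : Set Ordinal) (ξ : Ordinal) : Set Ordinal :=
  {θ | θ ∈ X ∧ star ξ < θ ∧ ∀ ζ < ξ, star ζ < θ → ThetaF X ζ < θ}

section Theta

variable {X : Set Ordinal} {ξ : Ordinal}

lemma ThetaF_eq_sInf (X : Set Ordinal) (ξ : Ordinal) :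
    ThetaF X ξ = sInf (thetaCandidates X ξ) := by
  rw [ThetaF]
  rfl

lemma ThetaF_le_of_mem {θ : Ordinal} (hθ : θ ∈ thetaCandidates X ξ) : ThetaF X ξ ≤ θ := by
  rw [ThetaF_eq_sInf]
  exact csInf_le' hθ

lemma thetaCandidates_nonempty (hX : IsClubBelowOmega X) :
    ∀ ξ < epsOmega, (thetaCandidates X ξ).Nonempty := by
  intro ξ
  induction ξ using WellFoundedLT.induction with
  | _ ξ ih =>
    intro hξ
    have hlt : ∀ ζ < ξ, ThetaF X ζ < OmegaO := fun ζ hζ =>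
      hX.1 _ (ThetaF_eq_sInf X ζ ▸ csInf_mem (ih ζ hζ (hζ.trans hξ))).1
    let earlier : Ordinal → Set Ordinal := fun t => ThetaF X '' {ζ | ζ < ξ ∧ star ζ ≤ t}
    have hbdd : ∀ t, BddAbove (earlier t) := fun t =>
      ⟨OmegaO, forall_mem_image.2 fun ζ hζ => (hlt ζ hζ.1).le⟩
    have hmono : Monotone fun t => sSup (earlier t) := fun s t hst =>
      csSup_le_csSup' (hbdd t) (image_mono fun ζ hζ => ⟨hζ.1, hζ.2.trans hst⟩)
    have hΩ : ∀ t < OmegaO, sSup (earlier t) < OmegaO := by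
      intro t ht
      have hsub : {ζ | ζ < ξ ∧ star ζ ≤ t} ⊆ {ζ | ζ < epsOmega ∧ star ζ ≤ t} :=
        fun ζ hζ => ⟨hζ.1.trans hξ, hζ.2⟩
      exact sSup_lt_OmegaO (((countable_setOf_star_le ht).mono hsub).image _)
        (forall_mem_image.2 fun ζ hζ => hlt ζ hζ.1)
    obtain ⟨θ, hθX, hξθ, hθ⟩ := hX.exists_mem_forall_lt hmono hΩ (star_lt_OmegaO ξ)
    exact ⟨θ, hθX, hξθ, fun ζ hζ hζθ =>
      (le_csSup (hbdd _) ⟨ζ, ⟨hζ, le_rfl⟩, rfl⟩).trans_lt (hθ _ hζθ)⟩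

lemma ThetaF_mem_thetaCandidates (hX : IsClubBelowOmega X) (hξ : ξ < epsOmega) :
    ThetaF X ξ ∈ thetaCandidates X ξ := by
  rw [ThetaF_eq_sInf]
  exact csInf_mem (thetaCandidates_nonempty hX ξ hξ)

lemma ThetaF_mem (hX : IsClubBelowOmega X) (hξ : ξ < epsOmega) : ThetaF X ξ ∈ X :=
  (ThetaF_mem_thetaCandidates hX hξ).1

lemma ThetaF_lt_OmegaO (hX : IsClubBelowOmega X) (hξ : ξ < epsOmega) : ThetaF X ξ < OmegaO :=
  hX.1 _ (ThetaF_mem hX hξ)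

lemma star_lt_ThetaF (hX : IsClubBelowOmega X) (hξ : ξ < epsOmega) : star ξ < ThetaF X ξ :=
  (ThetaF_mem_thetaCandidates hX hξ).2.1

lemma ThetaF_pos (hX : IsClubBelowOmega X) (hξ : ξ < epsOmega) : 0 < ThetaF X ξ :=
  zero_le.trans_lt (star_lt_ThetaF hX hξ)

lemma ThetaF_lt_ThetaF_of_star_lt (hX : IsClubBelowOmega X) {ζ : Ordinal} (hξ : ξ < epsOmega)
    (hζ : ζ < ξ) (hζs : star ζ < ThetaF X ξ) : ThetaF X ζ < ThetaF X ξ :=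
  (ThetaF_mem_thetaCandidates hX hξ).2.2 ζ hζ hζs

lemma lt_ThetaF (hX : IsClubBelowOmega X) (hΩ : ξ < OmegaO) : ξ < ThetaF X ξ := by
  have h := star_lt_ThetaF hX (hΩ.trans OmegaO_lt_epsOmega)
  rcases eq_or_ne ξ 0 with rfl | h0
  · rwa [star_ordinal_zero] at h
  · rwa [star_eq_self h0 hΩ] at h

lemma ThetaF_lt_ThetaF (hX : IsClubBelowOmega X) {ζ : Ordinal} (hζ : ζ < ξ) (hΩ : ξ < OmegaO) :
    ThetaF X ζ < ThetaF X ξ :=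
  ThetaF_lt_ThetaF_of_star_lt hX (hΩ.trans OmegaO_lt_epsOmega) hζ
    ((star_le_self (hζ.trans hΩ)).trans_lt (hζ.trans (lt_ThetaF hX hΩ)))

lemma ThetaF_notMem_limitPtsOf {y : Ordinal} (hy : y < ThetaF X ξ)
    (h : ∀ z ∈ X, y < z → z ∈ thetaCandidates X ξ) : ThetaF X ξ ∉ limitPtsOf X := by
  rintro ⟨-, hlim⟩
  obtain ⟨z, hzX, hyz, hzθ⟩ := hlim y hy
  exact (ThetaF_le_of_mem (h z hzX hyz)).not_gt hzθ

lemma ThetaF_zero_notMem_limitPtsOf (hX : IsClubBelowOmega X) : ThetaF X 0 ∉ limitPtsOf X :=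
  ThetaF_notMem_limitPtsOf (ThetaF_pos hX (OmegaO_pos.trans OmegaO_lt_epsOmega))
    fun z hzX hz => ⟨hzX, by rwa [star_ordinal_zero], fun ζ hζ => absurd hζ not_lt_zero⟩

lemma ThetaF_add_one_notMem_limitPtsOf (hX : IsClubBelowOmega X) {ζ : Ordinal}
    (hΩ : ζ + 1 < OmegaO) : ThetaF X (ζ + 1) ∉ limitPtsOf X := by
  have hζΩ := (lt_add_one ζ).trans hΩ
  refine ThetaF_notMem_limitPtsOf (ThetaF_lt_ThetaF hX (lt_add_one ζ) hΩ)
    fun z hzX hz => ⟨hzX, ?_, fun ζ' hζ' _ => ?_⟩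
  · rw [star_eq_self (zero_le.trans_lt (lt_add_one ζ)).ne' hΩ]
    exact (Order.add_one_le_of_lt (lt_ThetaF hX hζΩ)).trans_lt hz
  · rcases (Order.lt_add_one_iff.1 hζ').lt_or_eq with h | rfl
    · exact (ThetaF_lt_ThetaF hX h hζΩ).trans hz
    · exact hz

lemma ThetaF_notMem_limitPtsOf_of_mem_FIXs (hX : IsClubBelowOmega X) (hf : ξ ∈ FIXs X)
    (hΩ : ξ < OmegaO) : ThetaF X ξ ∉ limitPtsOf X := by
  obtain ⟨-, hfs, -, γ, hξγ, hγε, hγ⟩ := hf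
  have h0 : ξ ≠ 0 := by
    rintro rfl
    rw [star_ordinal_zero] at hfs
    exact not_lt_zero hfs
  have hstar := star_eq_self h0 hΩ
  refine ThetaF_notMem_limitPtsOf (lt_ThetaF hX hΩ)
    fun z hzX hz => ⟨hzX, by rwa [hstar], fun ζ hζ _ => ?_⟩
  have h := ThetaF_lt_ThetaF_of_star_lt hX hγε (hζ.trans hξγ)
    (by rw [← hγ, hstar]; exact (star_le_self (hζ.trans hΩ)).trans_lt hζ)
  rw [← hγ, hstar] at h
  exact h.trans hz

lemma ThetaF_mem_limitPtsOf_of_OmegaO_le (hX : IsClubBelowOmega X) (hΩ : OmegaO ≤ ξ)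
    (hξ : ξ < epsOmega) : ThetaF X ξ ∈ limitPtsOf X := by
  refine ⟨ThetaF_pos hX hξ, fun y hy => ?_⟩
  have hyΩ : y < OmegaO := hy.trans (ThetaF_lt_OmegaO hX hξ)
  exact ⟨ThetaF X y, ThetaF_mem hX (hyΩ.trans OmegaO_lt_epsOmega), lt_ThetaF hX hyΩ,
    ThetaF_lt_ThetaF_of_star_lt hX hξ (hyΩ.trans_le hΩ) ((star_le_self hyΩ).trans_lt hy)⟩

lemma mem_and_ThetaF_lt_of_notMem_limitPtsOf (hX : IsClubBelowOmega X)
    (hlim : Order.IsSuccLimit ξ) (hΩ : ξ < OmegaO) (hnl : ThetaF X ξ ∉ limitPtsOf X) :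
    ξ ∈ X ∧ ∀ ζ < ξ, ThetaF X ζ < ξ := by
  set S := ThetaF X '' Iio ξ
  have hζε : ∀ ζ < ξ, ζ < epsOmega := fun ζ hζ => (hζ.trans hΩ).trans OmegaO_lt_epsOmega
  have hbdd : BddAbove S :=
    ⟨OmegaO, forall_mem_image.2 fun ζ hζ => (ThetaF_lt_OmegaO hX (hζε ζ hζ)).le⟩
  have hne : S.Nonempty := ⟨_, 0, hlim.pos, rfl⟩
  have hSX : sSup S ∈ X := hX.sSup_mem (image_subset_iff.2 fun ζ hζ => ThetaF_mem hX (hζε ζ hζ))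
    ((countable_Iio_of_lt_OmegaO hΩ).image _) hne
  have hlt_sSup : ∀ ζ < ξ, ThetaF X ζ < sSup S := fun ζ hζ =>
    (ThetaF_lt_ThetaF hX (Order.lt_succ ζ) ((hlim.succ_lt hζ).trans hΩ)).trans_le
      (le_csSup hbdd ⟨_, hlim.succ_lt hζ, rfl⟩)
  have hξ_le : ξ ≤ sSup S :=
    le_of_forall_lt fun ζ hζ => (lt_ThetaF hX (hζ.trans hΩ)).trans (hlt_sSup ζ hζ)
  rcases hξ_le.eq_or_lt with heq | hlt
  · exact ⟨heq ▸ hSX, fun ζ hζ => heq ▸ hlt_sSup ζ hζ⟩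
  · refine absurd ?_ hnl
    have hθ : ThetaF X ξ = sSup S := le_antisymm
      (ThetaF_le_of_mem ⟨hSX, by rwa [star_eq_self hlim.pos.ne' hΩ], fun ζ hζ _ => hlt_sSup ζ hζ⟩)
      (csSup_le hne (forall_mem_image.2 fun ζ hζ => (ThetaF_lt_ThetaF hX hζ hΩ).le))
    refine ⟨ThetaF_pos hX (hΩ.trans OmegaO_lt_epsOmega), fun y hy => ?_⟩
    obtain ⟨_, ⟨ζ, hζ, rfl⟩, hyζ⟩ := exists_lt_of_lt_csSup hne (hθ ▸ hy)
    exact ⟨_, ThetaF_mem hX (hζε ζ hζ), hyζ, ThetaF_lt_ThetaF hX hζ hΩ⟩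

lemma exists_gt_ThetaF_eq (hX : IsClubBelowOmega X) (hξX : ξ ∈ X) (h1 : 1 < ξ)
    (hlt : ∀ ζ < ξ, ThetaF X ζ < ξ) (hE : ξ < ThetaEps X) :
    ∃ γ, ξ < γ ∧ γ < epsOmega ∧ ThetaF X γ = ξ := by
  obtain ⟨n, hn⟩ := Ordinal.lt_iSup_iff.1 hE
  set G := {γ | γ < epsOmega ∧ star γ < ξ ∧ ξ ≤ ThetaF X γ}
  have hG : OmegaTow n ∈ G := ⟨OmegaTow_lt_epsOmega n, (star_OmegaTow n).trans_lt h1, hn.le⟩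
  obtain ⟨hγε, hγs, hγξ⟩ : sInf G ∈ G := csInf_mem ⟨_, hG⟩
  have hθ : ThetaF X (sInf G) = ξ := by
    refine le_antisymm (ThetaF_le_of_mem ⟨hξX, hγs, fun ζ hζ hζs => ?_⟩) hγξ
    by_contra! hle
    exact (csInf_le' (show ζ ∈ G from ⟨hζ.trans hγε, hζs, hle⟩)).not_gt hζ
  refine ⟨sInf G, not_le.1 fun hle => ?_, hγε, hθ⟩
  have h := hlt _ ((lt_ThetaF hX (hle.trans_lt (hX.1 ξ hξX))).trans_eq hθ)
  rw [hθ] at h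
  exact lt_irrefl _ h

lemma mem_FIXs_of_isSuccLimit (hlim : Order.IsSuccLimit ξ) (hΩ : ξ < OmegaO)
    (hγ : ∃ γ, ξ < γ ∧ γ < epsOmega ∧ ThetaF X γ = ξ) : ξ ∈ FIXs X := by
  obtain ⟨γ, hξγ, hγε, hγ⟩ := hγ
  have hstar := star_eq_self hlim.pos.ne' hΩ
  refine ⟨hΩ.trans OmegaO_lt_epsOmega, ?_, ?_, γ, hξγ, hγε, ?_⟩
  · rw [fs_one_of_isSuccLimit hlim hΩ, star_ordinal_one, hstar]
    exact one_lt_of_isSuccLimit hlim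
  · rw [hstar, tau_of_isSuccLimit hlim hΩ]
  · rw [hstar, hγ]

end Theta

theorem stmt12_general (X : Set Ordinal) (hX : IsClubBelowOmega X)
    (ξ : Ordinal) (h : ξ ∈ hatEps X) :
    ThetaF X ξ ∉ limitPtsOf X ↔ ξ < OmegaO ∧ ξ ∈ JUMPs X := by
  obtain ⟨hξε, hξE⟩ := h
  constructor
  · intro hnl
    have hΩ : ξ < OmegaO :=
      lt_of_not_ge fun hΩ => hnl (ThetaF_mem_limitPtsOf_of_OmegaO_le hX hΩ hξε)
    refine ⟨hΩ, ?_⟩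
    rcases zero_or_succ_or_isSuccLimit ξ with rfl | ⟨ζ, rfl⟩ | hlim
    · exact Or.inl (Or.inl rfl)
    · exact Or.inl (Or.inr ⟨ζ, Order.succ_eq_add_one ζ⟩)
    · obtain ⟨hξX, hlt⟩ := mem_and_ThetaF_lt_of_notMem_limitPtsOf hX hlim hΩ hnl
      rw [star_eq_self hlim.pos.ne' hΩ] at hξE
      exact Or.inr (mem_FIXs_of_isSuccLimit hlim hΩ
        (exists_gt_ThetaF_eq hX hξX (one_lt_of_isSuccLimit hlim) hlt hξE))
  · rintro ⟨hΩ, (rfl | ⟨ζ, rfl⟩) | hfix⟩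
    · exact ThetaF_zero_notMem_limitPtsOf hX
    · exact ThetaF_add_one_notMem_limitPtsOf hX hΩ
    · exact ThetaF_notMem_limitPtsOf_of_mem_FIXs hX hfix hΩ

/-- `Θ_X(ξ)` is not a limit point of `X` iff `ξ < Ω` and `ξ ∈ JUMP(X)`. -/
theorem stmt12 (X : Set Ordinal) (hX : IsClubBelowOmega X) (h0X : 0 ∉ X)
    (ξ : Ordinal) (h : ξ ∈ hatEps X) :
    ThetaF X ξ ∉ limitPtsOf X ↔ ξ < OmegaO ∧ ξ ∈ JUMPs X :=
  stmt12_general X hX ξ h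

end
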